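/- arXiv:1904.06858 — 5 statements merged into one kernel-verified Lean document; each statement's English description precedes it below -/
import Mathlib

section
/- Let f ∈ ℂ[z] be a polynomial of degree d > 1. Then for every z ∈ ℂ the limit g_f(z) := lim_{n→∞} d^{-n} log max{1,|f^n(z)|} exists, and there is a constant C > 0 such that for every n ≥ 1 and every z ∈ ℂ, | g_f(z) − d^{-n} log max{1,|f^n(z)|} | ≤ C d^{-n}. -/
open Filter Topology Polynomial Finset

-- upper bound
lemma green_upper (f : Polynomial ℂ) (d : ℕ) (hdeg : f.natDegree = d) :
    ∃ A : ℝ, 1 ≤ A ∧ ∀ w : ℂ, ‖f.eval w‖ ≤ A * (max 1 ‖w‖) ^ d := by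
  set T : ℝ := ∑ i ∈ range (d + 1), ‖f.coeff i‖ with hT
  refine ⟨max 1 T, le_max_left _ _, fun w => ?_⟩
  set M : ℝ := max 1 ‖w‖ with hM
  have hM1 : (1 : ℝ) ≤ M := le_max_left _ _
  have hMw : ‖w‖ ≤ M := le_max_right _ _
  have h0 : f.eval w = ∑ i ∈ range (d + 1), f.coeff i * w ^ i := by
    rw [← hdeg]; exact Polynomial.eval_eq_sum_range w
  calc ‖f.eval w‖ ≤ ∑ i ∈ range (d + 1), ‖f.coeff i * w ^ i‖ := by
        rw [h0]; exact norm_sum_le _ _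
    _ ≤ ∑ i ∈ range (d + 1), ‖f.coeff i‖ * M ^ d := by
        refine Finset.sum_le_sum fun i hi => ?_
        rw [norm_mul, norm_pow]
        refine mul_le_mul_of_nonneg_left ?_ (norm_nonneg _)
        calc ‖w‖ ^ i ≤ M ^ i := pow_le_pow_left₀ (norm_nonneg _) hMw i
          _ ≤ M ^ d := pow_le_pow_right₀ hM1 (by simp at hi; omega : i ≤ d)
    _ = T * M ^ d := by rw [← Finset.sum_mul]
    _ ≤ max 1 T * M ^ d := by
        exact mul_le_mul_of_nonneg_right (le_max_right _ _) (by positivity)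

-- lower bound
lemma green_lower (f : Polynomial ℂ) (d : ℕ) (hd : 1 < d) (hdeg : f.natDegree = d) :
    ∃ B : ℝ, 0 < B ∧ ∀ w : ℂ, B * (max 1 ‖w‖) ^ d ≤ max 1 ‖f.eval w‖ := by
  have hf0 : f ≠ 0 := by intro h; rw [h] at hdeg; simp at hdeg; omega
  set c : ℝ := ‖f.coeff d‖ with hc
  have hcpos : 0 < c := by
    rw [hc]
    have : f.coeff d ≠ 0 := by
      rw [← hdeg]; exact Polynomial.leadingCoeff_ne_zero.mpr hf0
    simpa using this
  set S : ℝ := ∑ i ∈ range d, ‖f.coeff i‖ with hS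
  have hSnn : 0 ≤ S := Finset.sum_nonneg fun i _ => norm_nonneg _
  set R : ℝ := max 1 (2 * (S + 1) / c) with hR
  have hR1 : (1 : ℝ) ≤ R := le_max_left _ _
  have hRpos : 0 < R := lt_of_lt_of_le one_pos hR1
  refine ⟨min (c / 2) (1 / R ^ d), by positivity, fun w => ?_⟩
  set m : ℝ := ‖w‖ with hm
  set M : ℝ := max 1 m with hMdef
  have hM1 : (1 : ℝ) ≤ M := le_max_left _ _
  by_cases hcase : m ≤ R
  · -- small w
    have hMR : M ≤ R := max_le hR1 (by exact hcase)
    calc min (c / 2) (1 / R ^ d) * M ^ d ≤ (1 / R ^ d) * R ^ d := by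
          refine mul_le_mul (min_le_right _ _) (pow_le_pow_left₀ (by linarith [le_max_right (1:ℝ) m, norm_nonneg w]) hMR d) (by positivity) (by positivity)
      _ = 1 := by field_simp
      _ ≤ max 1 ‖f.eval w‖ := le_max_left _ _
  · push_neg at hcase
    have hm1 : (1 : ℝ) ≤ m := le_trans hR1 hcase.le
    have hMm : M = m := max_eq_right hm1
    have hmpos : 0 < m := lt_of_lt_of_le one_pos hm1
    -- f.eval w = tail + coeff d * w^d
    have h0 : f.eval w = (∑ i ∈ range d, f.coeff i * w ^ i) + f.coeff d * w ^ d := by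
      have := Polynomial.eval_eq_sum_range (p := f) w
      rw [hdeg, Finset.sum_range_succ] at this
      exact this
    have htail : ‖∑ i ∈ range d, f.coeff i * w ^ i‖ ≤ S * m ^ (d - 1) := by
      calc ‖∑ i ∈ range d, f.coeff i * w ^ i‖ ≤ ∑ i ∈ range d, ‖f.coeff i * w ^ i‖ :=
            norm_sum_le _ _
        _ ≤ ∑ i ∈ range d, ‖f.coeff i‖ * m ^ (d - 1) := by
            refine Finset.sum_le_sum fun i hi => ?_
            rw [norm_mul, norm_pow]
            refine mul_le_mul_of_nonneg_left ?_ (norm_nonneg _)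
            exact pow_le_pow_right₀ hm1 (by simp at hi; omega)
        _ = S * m ^ (d - 1) := by rw [← Finset.sum_mul]
    have hlead : ‖f.coeff d * w ^ d‖ = c * m ^ d := by rw [norm_mul, norm_pow]
    have hmain : c * m ^ d - S * m ^ (d - 1) ≤ ‖f.eval w‖ := by
      have h2 : ‖f.coeff d * w ^ d‖
          ≤ ‖(∑ i ∈ range d, f.coeff i * w ^ i) + f.coeff d * w ^ d‖
            + ‖∑ i ∈ range d, f.coeff i * w ^ i‖ := by
        calc ‖f.coeff d * w ^ d‖
            = ‖((∑ i ∈ range d, f.coeff i * w ^ i) + f.coeff d * w ^ d)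
                - (∑ i ∈ range d, f.coeff i * w ^ i)‖ := by congr 1; ring
          _ ≤ _ := norm_sub_le _ _
      rw [hlead, ← h0] at h2; linarith [htail]
    -- S * m^(d-1) ≤ (c/2) * m^d
    have hSm : S * m ^ (d - 1) ≤ (c / 2) * m ^ d := by
      have hRm : 2 * (S + 1) / c ≤ m := le_trans (le_max_right _ _) hcase.le
      have hScm : S ≤ c / 2 * m := by
        have : 2 * (S + 1) ≤ c * m := by
          rw [div_le_iff₀ hcpos] at hRm; linarith [hRm]
        linarith
      have hpow : m ^ d = m * m ^ (d - 1) := by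
        conv_lhs => rw [show d = (d - 1) + 1 by omega]
        ring
      rw [hpow]
      calc S * m ^ (d - 1) ≤ (c / 2 * m) * m ^ (d - 1) := by
            exact mul_le_mul_of_nonneg_right hScm (by positivity)
        _ = c / 2 * (m * m ^ (d - 1)) := by ring
    have : (c / 2) * m ^ d ≤ ‖f.eval w‖ := by linarith
    calc min (c / 2) (1 / R ^ d) * M ^ d ≤ (c / 2) * m ^ d := by
          rw [hMm]
          exact mul_le_mul_of_nonneg_right (min_le_left _ _) (by positivity)
      _ ≤ ‖f.eval w‖ := this
      _ ≤ max 1 ‖f.eval w‖ := le_max_right _ _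

lemma green_key (f : Polynomial ℂ) (d : ℕ) (hd : 1 < d) (hdeg : f.natDegree = d) :
    ∃ C₀ > (0:ℝ), ∀ w : ℂ,
      |Real.log (max 1 ‖f.eval w‖)
        - d * Real.log (max 1 ‖w‖)| ≤ C₀ := by
  obtain ⟨A, hA1, hA⟩ := green_upper f d hdeg
  obtain ⟨B, hB0, hB⟩ := green_lower f d hd hdeg
  have hlogA : 0 ≤ Real.log A := Real.log_nonneg hA1
  refine ⟨max (Real.log A) |Real.log B| + 1, by positivity, fun w => ?_⟩
  set M : ℝ := max 1 ‖w‖ with hMdef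
  have hM1 : (1 : ℝ) ≤ M := le_max_left _ _
  have hMpos : (0 : ℝ) < M := lt_of_lt_of_le one_pos hM1
  have hA0 : (0:ℝ) < A := lt_of_lt_of_le one_pos hA1
  have hupper : Real.log (max 1 ‖f.eval w‖) ≤ Real.log A + d * Real.log M := by
    have h1 : max 1 ‖f.eval w‖ ≤ A * M ^ d := by
      refine max_le ?_ (hA w)
      have h1d : (1:ℝ) ≤ M ^ d := by
        calc (1:ℝ) = 1 ^ d := (one_pow d).symm
          _ ≤ M ^ d := pow_le_pow_left₀ (by norm_num) hM1 d
      nlinarith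
    calc Real.log (max 1 ‖f.eval w‖) ≤ Real.log (A * M ^ d) :=
          Real.log_le_log (by positivity) h1
      _ = Real.log A + d * Real.log M := by
          rw [Real.log_mul (by positivity) (by positivity), Real.log_pow]
  have hlower : Real.log B + d * Real.log M ≤ Real.log (max 1 ‖f.eval w‖) := by
    calc Real.log B + d * Real.log M = Real.log (B * M ^ d) := by
          rw [Real.log_mul (by positivity) (by positivity), Real.log_pow]
      _ ≤ Real.log (max 1 ‖f.eval w‖) := Real.log_le_log (by positivity) (hB w)
  rw [abs_le]
  constructor
  · have := neg_abs_le (Real.log B)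
    have h2 : |Real.log B| ≤ max (Real.log A) |Real.log B| + 1 := by
      have := le_max_right (Real.log A) |Real.log B|
      linarith
    linarith
  · have := le_max_left (Real.log A) |Real.log B|
    linarith

/-- For a polynomial `f ∈ ℂ[z]` of degree `d > 1`, the Green (escape-rate)
function `g_f(z) = lim_n d^{-n} log⁺ |f^n(z)|` exists at every point, and there is `C > 0`
with `|g_f(z) - d^{-n} log⁺|f^n(z)|| ≤ C d^{-n}` for all `n ≥ 1` and all `z`. -/
theorem green_function_exists_with_uniform_rate
    (f : Polynomial ℂ) (d : ℕ) (hd : 1 < d) (hdeg : f.natDegree = d) :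
    ∃ gf : ℂ → ℝ, ∃ C > (0 : ℝ), ∀ z : ℂ,
      Tendsto (fun n : ℕ =>
          Real.log (max 1 ‖(fun w => f.eval w)^[n] z‖) / (d : ℝ) ^ n)
        atTop (𝓝 (gf z)) ∧
      ∀ n : ℕ, 1 ≤ n →
        |gf z - Real.log (max 1 ‖(fun w => f.eval w)^[n] z‖) / (d : ℝ) ^ n|
          ≤ C / (d : ℝ) ^ n := by
  obtain ⟨C₀, hC₀, hkey⟩ := green_key f d hd hdeg
  have hd1 : (1:ℝ) < d := by exact_mod_cast hd
  have hd0 : (0:ℝ) < d := lt_trans one_pos hd1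
  have hd2 : (2:ℝ) ≤ d := by exact_mod_cast hd
  set a : ℂ → ℕ → ℝ := fun z n =>
    Real.log (max 1 ‖(fun w => f.eval w)^[n] z‖) / (d:ℝ)^n with ha
  have hstep : ∀ z n, dist (a z n) (a z (n+1)) ≤ (C₀/d) * (1/d)^n := by
    intro z n
    rw [Real.dist_eq]
    have hiter : (fun w => f.eval w)^[n+1] z = f.eval ((fun w => f.eval w)^[n] z) :=
      Function.iterate_succ_apply' _ _ _
    set wn := (fun w => f.eval w)^[n] z with hwn
    have hk := hkey wn
    have heq : a z n - a z (n+1)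
        = -(Real.log (max 1 ‖f.eval wn‖)
            - d * Real.log (max 1 ‖wn‖)) / (d:ℝ)^(n+1) := by
      rw [ha]
      simp only [hiter, ← hwn]
      have hpn : ((d:ℝ)^n) ≠ 0 := by positivity
      have hpn1 : ((d:ℝ)^(n+1)) ≠ 0 := by positivity
      field_simp
      ring
    rw [heq, abs_div, abs_neg, abs_of_pos (by positivity : (0:ℝ) < (d:ℝ)^(n+1))]
    have hrw : (C₀/d) * (1/d)^n = C₀ / (d:ℝ)^(n+1) := by
      rw [div_pow, one_pow, pow_succ]
      rw [div_mul_div_comm, mul_one, mul_comm]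
    rw [hrw]
    exact div_le_div_of_nonneg_right hk (by positivity)
  have hr : (1:ℝ)/d < 1 := by rw [div_lt_one hd0]; exact hd1
  have hall : ∀ z : ℂ, ∃ L : ℝ, Tendsto (a z) atTop (𝓝 L) ∧
      ∀ n : ℕ, |L - a z n| ≤ C₀ / (d:ℝ)^n := by
    intro z
    have hcauchy : CauchySeq (a z) := cauchySeq_of_le_geometric (1/d) (C₀/d) hr (hstep z)
    obtain ⟨L, hL⟩ := cauchySeq_tendsto_of_complete hcauchy
    refine ⟨L, hL, fun n => ?_⟩
    have hdist := dist_le_of_le_geometric_of_tendsto (1/d) (C₀/d) hr (hstep z) hL n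
    have h1 : (C₀/d) * (1/d)^n / (1 - 1/d) = C₀ / ((d:ℝ)^n * (d - 1)) := by
      rw [div_pow, one_pow, div_mul_div_comm, mul_one, div_div]
      congr 1
      field_simp
    have h2 : C₀ / ((d:ℝ)^n * (d - 1)) ≤ C₀ / (d:ℝ)^n := by
      apply div_le_div_of_nonneg_left hC₀.le (by positivity)
      have hfac : (d:ℝ)^n * 1 ≤ (d:ℝ)^n * ((d:ℝ)-1) :=
        mul_le_mul_of_nonneg_left (by linarith [hd2]) (le_of_lt (pow_pos hd0 n))
      linarith
    rw [h1] at hdist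
    rw [abs_sub_comm, ← Real.dist_eq]
    exact le_trans hdist h2
  choose gf hgf using hall
  exact ⟨gf, C₀, hC₀, fun z => ⟨(hgf z).1, fun n _ => (hgf z).2 n⟩⟩
end

section
/- Let f ∈ ℂ[z] be a polynomial of degree d > 1, let m ≥ 1 be an integer and let a ∈ ℂ. Then the family of subharmonic functions z ↦ (d^n − m)^{-1} log|(f^n)^{(m)}(z) − a| (over all n with d^n > m) is locally uniformly bounded from above on ℂ: for every compact set L ⊂ ℂ there is C > 0 such that for all n with d^n > m and all z ∈ L, log|(f^n)^{(m)}(z) − a| ≤ C (d^n − m). -/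
open Filter Topology Metric



-- Cauchy estimate iterated: entire function bounded on closedBall c k bounds iteratedDeriv k.
lemma cauchy_iter (k : ℕ) : ∀ (g : ℂ → ℂ), Differentiable ℂ g → ∀ (c : ℂ) (M : ℝ),
    (∀ w, dist w c ≤ (k : ℝ) → ‖g w‖ ≤ M) → ‖iteratedDeriv k g c‖ ≤ M := by
  induction k with
  | zero => intro g hg c M hM; simpa using hM c (by simp)
  | succ k ih =>
    intro g hg c M hM
    rw [iteratedDeriv_succ']
    have hderiv : Differentiable ℂ (deriv g) := by
      have := (Complex.analyticOnNhd_univ_iff_differentiable.mpr hg).deriv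
      exact Complex.analyticOnNhd_univ_iff_differentiable.mp this
    refine ih (deriv g) hderiv c M ?_
    intro w hw
    have h1 : (0:ℝ) < 1 := one_pos
    have := Complex.norm_deriv_le_of_forall_mem_sphere_norm_le (c := w) (R := 1) (C := M)
      h1 (hg.diffContOnCl) ?_
    · simpa using this
    · intro z hz
      apply hM
      have : dist z w = 1 := mem_sphere_iff_norm.mp hz ▸ by
        simpa [dist_eq_norm] using mem_sphere_iff_norm.mp hz
      calc dist z c ≤ dist z w + dist w c := dist_triangle z w c
        _ ≤ 1 + k := by rw [this]; linarith
        _ = ((k+1 : ℕ) : ℝ) := by push_cast; ring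


-- polynomial eval bound
lemma poly_bound (f : Polynomial ℂ) (d : ℕ) (hdeg : f.natDegree = d) :
    ∃ B : ℝ, 2 ≤ B ∧ ∀ w : ℂ, ‖f.eval w‖ ≤ B * max 1 ‖w‖ ^ d := by
  refine ⟨2 + ∑ i ∈ Finset.range (d + 1), ‖f.coeff i‖, ?_, ?_⟩
  · have : (0:ℝ) ≤ ∑ i ∈ Finset.range (d + 1), ‖f.coeff i‖ :=
      Finset.sum_nonneg fun i _ => norm_nonneg _
    linarith
  · intro w
    have h1 : (1:ℝ) ≤ max 1 ‖w‖ := le_max_left _ _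
    have hKd : (1:ℝ) ≤ max 1 ‖w‖ ^ d := one_le_pow₀ h1
    have := f.eval_eq_sum_range (x := w)
    rw [hdeg] at this
    rw [this]
    calc ‖∑ i ∈ Finset.range (d + 1), f.coeff i * w ^ i‖
        ≤ ∑ i ∈ Finset.range (d + 1), ‖f.coeff i * w ^ i‖ := norm_sum_le _ _
      _ ≤ ∑ i ∈ Finset.range (d + 1), ‖f.coeff i‖ * max 1 ‖w‖ ^ d := by
          refine Finset.sum_le_sum fun i hi => ?_
          rw [norm_mul, norm_pow]
          refine mul_le_mul_of_nonneg_left ?_ (norm_nonneg _)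
          calc ‖w‖ ^ i ≤ max 1 ‖w‖ ^ i := by
                exact pow_le_pow_left₀ (norm_nonneg _) (le_max_right _ _) i
            _ ≤ max 1 ‖w‖ ^ d := pow_le_pow_right₀ h1 (Nat.lt_succ_iff.mp (Finset.mem_range.mp hi))
      _ = (∑ i ∈ Finset.range (d + 1), ‖f.coeff i‖) * max 1 ‖w‖ ^ d := by
          rw [Finset.sum_mul]
      _ ≤ (2 + ∑ i ∈ Finset.range (d + 1), ‖f.coeff i‖) * max 1 ‖w‖ ^ d := by
          have : (0:ℝ) ≤ max 1 ‖w‖ ^ d := by positivity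
          nlinarith

lemma iter_bound (f : Polynomial ℂ) (d : ℕ) (hd : 1 < d) (B : ℝ) (hB : 2 ≤ B)
    (hpb : ∀ w : ℂ, ‖f.eval w‖ ≤ B * max 1 ‖w‖ ^ d) (w : ℂ) (n : ℕ) :
    max 1 ‖(fun w => f.eval w)^[n] w‖ ≤ (B * max 1 ‖w‖) ^ (2 * d ^ n - 1) := by
  induction n with
  | zero =>
    have h1 : (1:ℝ) ≤ max 1 ‖w‖ := le_max_left _ _
    simpa using by nlinarith [le_max_left (1:ℝ) ‖w‖, le_max_right (1:ℝ) ‖w‖]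
  | succ n ih =>
    rw [Function.iterate_succ_apply']
    set u := (fun w => f.eval w)^[n] w
    have hu1 : (1:ℝ) ≤ max 1 ‖u‖ := le_max_left _ _
    have hK1 : (1:ℝ) ≤ B * max 1 ‖w‖ := by nlinarith [le_max_left (1:ℝ) ‖w‖]
    have hKB : B ≤ (B * max 1 ‖w‖) := by nlinarith [le_max_left (1:ℝ) ‖w‖]
    have step : ‖f.eval u‖ ≤ B * max 1 ‖u‖ ^ d := hpb u
    have h2 : max 1 ‖f.eval u‖ ≤ B * max 1 ‖u‖ ^ d := by
      refine max_le ?_ step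
      nlinarith [one_le_pow₀ hu1 (n := d)]
    have h3 : B * max 1 ‖u‖ ^ d ≤ B * ((B * max 1 ‖w‖) ^ (2 * d ^ n - 1)) ^ d := by
      exact mul_le_mul_of_nonneg_left
        (pow_le_pow_left₀ (by positivity) ih d) (by linarith)
    have hexp : (2 * d ^ n - 1) * d + 1 ≤ 2 * d ^ (n + 1) - 1 := by
      have he : 1 ≤ d ^ n := Nat.one_le_pow _ _ (by omega)
      have h4 : d ≤ d ^ n * d := Nat.le_mul_of_pos_left d (by omega)
      have : (2 * d ^ n - 1) * d = 2 * (d ^ n * d) - d := by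
        rw [Nat.sub_mul]; ring_nf
      rw [this, pow_succ]
      omega
    calc max 1 ‖f.eval u‖ ≤ B * ((B * max 1 ‖w‖) ^ (2 * d ^ n - 1)) ^ d := h2.trans h3
      _ ≤ (B * max 1 ‖w‖) * ((B * max 1 ‖w‖) ^ (2 * d ^ n - 1)) ^ d := by
          exact mul_le_mul_of_nonneg_right hKB (by positivity)
      _ = (B * max 1 ‖w‖) ^ ((2 * d ^ n - 1) * d + 1) := by
          rw [← pow_mul, pow_succ, mul_comm]
      _ ≤ (B * max 1 ‖w‖) ^ (2 * d ^ (n + 1) - 1) := pow_le_pow_right₀ hK1 hexp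

/-- For a polynomial `f ∈ ℂ[z]` of degree `d > 1`, `m ≥ 1` and `a ∈ ℂ`, the
family of subharmonic functions `z ↦ (d^n − m)⁻¹ log|(f^n)^{(m)}(z) − a|` (over all `n` with
`d^n > m`) is locally uniformly bounded from above on `ℂ`. -/
theorem local_upper_bound_higher_derivative_potentials
    (f : Polynomial ℂ) (d m : ℕ) (hd : 1 < d) (hm : 1 ≤ m) (hdeg : f.natDegree = d)
    (a : ℂ) :
    ∀ L : Set ℂ, IsCompact L →
      ∃ C > (0 : ℝ), ∀ n : ℕ, m < d ^ n → ∀ z ∈ L,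
        Real.log ‖iteratedDeriv m ((fun w => f.eval w)^[n]) z - a‖
          ≤ C * ((d : ℝ) ^ n - (m : ℝ)) := by
  intro L hL
  obtain ⟨B, hB2, hpb⟩ := poly_bound f d hdeg
  obtain ⟨r, hr⟩ := hL.isBounded.subset_closedBall 0
  set R : ℝ := max r 0 with hRdef
  have hR0 : 0 ≤ R := le_max_right _ _
  have hrL : L ⊆ closedBall 0 R := hr.trans (closedBall_subset_closedBall (le_max_left _ _))
  set K : ℝ := B * max 1 (R + m) with hKdef
  have hK2 : 2 ≤ K := by
    have h1 : (1:ℝ) ≤ max 1 (R + m) := le_max_left _ _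
    nlinarith
  set K' : ℝ := (1 + ‖a‖) * K with hK'def
  have ha0 : (0:ℝ) ≤ ‖a‖ := norm_nonneg _
  have hK'2 : 2 ≤ K' := by nlinarith
  have hlogK' : 0 < Real.log K' := Real.log_pos (by linarith)
  refine ⟨2 * (m + 1) * Real.log K', by positivity, ?_⟩
  intro n hn z hz
  have hdn1 : 1 ≤ d ^ n := Nat.one_le_pow _ _ (by omega)
  set N : ℕ := 2 * d ^ n - 1 with hNdef
  have hN1 : 1 ≤ N := by omega
  set g : ℂ → ℂ := (fun w => f.eval w)^[n] with hgdef
  have hg : Differentiable ℂ g := (f.differentiable).iterate n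
  -- bound on iteratedDeriv
  have hbound : ‖iteratedDeriv m g z‖ ≤ K ^ N := by
    apply cauchy_iter m g hg z
    intro w hw
    have hwz : ‖z‖ ≤ R := by simpa using hrL hz
    have hwn : ‖w‖ ≤ R + m := by
      have := norm_sub_norm_le w z
      have hdw : ‖w - z‖ ≤ (m:ℝ) := by simpa [dist_eq_norm] using hw
      linarith
    have hmax : max 1 ‖w‖ ≤ max 1 (R + m) := max_le_max le_rfl hwn
    calc ‖g w‖ ≤ max 1 ‖g w‖ := le_max_right _ _
      _ ≤ (B * max 1 ‖w‖) ^ N := iter_bound f d hd B hB2 hpb w n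
      _ ≤ K ^ N := by
          apply pow_le_pow_left₀ (by positivity)
          rw [hKdef]
          nlinarith [le_max_left (1:ℝ) ‖w‖]
  have hK1 : (1:ℝ) ≤ K := by linarith
  have hKN1 : (1:ℝ) ≤ K ^ N := one_le_pow₀ hK1
  have habs : ‖iteratedDeriv m g z - a‖ ≤ K' ^ N := by
    calc ‖iteratedDeriv m g z - a‖
        ≤ ‖iteratedDeriv m g z‖ + ‖a‖ := by
          exact norm_sub_le (iteratedDeriv m g z) a
      _ ≤ K ^ N + ‖a‖ * K ^ N := by nlinarith
      _ = (1 + ‖a‖) * K ^ N := by ring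
      _ ≤ (1 + ‖a‖) ^ N * K ^ N := by
          have : (1 + ‖a‖) ≤ (1 + ‖a‖) ^ N := le_self_pow₀ (by linarith) (by omega)
          nlinarith
      _ = K' ^ N := by simp only [hK'def, hKdef, mul_pow, mul_assoc]
  -- pass to logs
  have hrhs0 : (0:ℝ) ≤ 2 * (m + 1) * Real.log K' * ((d:ℝ) ^ n - (m:ℝ)) := by
    have : (m:ℝ) + 1 ≤ (d:ℝ) ^ n := by exact_mod_cast Nat.succ_le_of_lt hn
    have h1 : (0:ℝ) ≤ (d:ℝ) ^ n - (m:ℝ) := by linarith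
    positivity
  have hlog : Real.log ‖iteratedDeriv m g z - a‖ ≤ N * Real.log K' := by
    by_cases hsmall : ‖iteratedDeriv m g z - a‖ ≤ 1
    · have := Real.log_nonpos (by positivity) hsmall
      have hN0 : (0:ℝ) ≤ N * Real.log K' := by positivity
      linarith
    · push_neg at hsmall
      calc Real.log ‖iteratedDeriv m g z - a‖
          ≤ Real.log (K' ^ N) := Real.log_le_log (by linarith) habs
        _ = N * Real.log K' := Real.log_pow _ _
  refine hlog.trans ?_
  -- N ≤ 2 d^n and d^n ≤ (m+1)(d^n - m)
  have hcast : (N:ℝ) ≤ 2 * (d:ℝ) ^ n := by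
    have : (N:ℝ) = 2 * (d^n : ℕ) - 1 := by
      rw [hNdef]; push_cast [Nat.cast_sub (by omega : 1 ≤ 2 * d ^ n)]; ring
    push_cast at this ⊢
    rw [this]; linarith
  have hmn : (m:ℝ) + 1 ≤ (d:ℝ) ^ n := by exact_mod_cast Nat.succ_le_of_lt hn
  have hkey : 2 * (d:ℝ) ^ n ≤ 2 * (m + 1) * ((d:ℝ) ^ n - m) := by nlinarith
  calc (N:ℝ) * Real.log K' ≤ 2 * (d:ℝ) ^ n * Real.log K' :=
        mul_le_mul_of_nonneg_right hcast hlogK'.le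
    _ ≤ 2 * (m + 1) * ((d:ℝ) ^ n - m) * Real.log K' :=
        mul_le_mul_of_nonneg_right hkey hlogK'.le
    _ = 2 * (m + 1) * Real.log K' * ((d:ℝ) ^ n - (m:ℝ)) := by ring
end

section
/- Let f be a Hénon-type polynomial automorphism of ℂ² of degree d > 1 satisfying the normalization and standard facts in the context, with f^n = (P_n, Q_n). Then for each j ∈ {z, w}, ∂_j Q_n = o(d^n P_n) locally uniformly on B := {g⁺ > 0}: for every compact set K ⊂ B and every ε > 0 there exists N ∈ ℕ such that for all n ≥ N and all (z,w) ∈ K, |∂_j Q_n(z,w)| ≤ ε d^n |P_n(z,w)|. -/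
open Filter Topology

noncomputable section

/-- Evaluation of a polynomial in two variables at a point of `ℂ²`. -/
def ev (p : MvPolynomial (Fin 2) ℂ) (v : ℂ × ℂ) : ℂ :=
  MvPolynomial.eval ![v.1, v.2] p

/-- The Wirtinger partial derivative `∂_z` of a real function on `ℂ²`
(first coordinate): `∂_z g = (∂_x g − i ∂_y g)/2`. -/
def wirtZ (g : ℂ × ℂ → ℝ) (v : ℂ × ℂ) : ℂ :=
  (↑(fderiv ℝ g v ((1 : ℂ), (0 : ℂ))) - Complex.I * ↑(fderiv ℝ g v (Complex.I, (0 : ℂ)))) / 2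

/-- The Wirtinger partial derivative `∂_w` of a real function on `ℂ²`
(second coordinate). -/
def wirtW (g : ℂ × ℂ → ℝ) (v : ℂ × ℂ) : ℂ :=
  (↑(fderiv ℝ g v ((0 : ℂ), (1 : ℂ))) - Complex.I * ↑(fderiv ℝ g v ((0 : ℂ), Complex.I))) / 2

/-- `g` is pluriharmonic on the open set `B ⊆ ℂ²`: locally the real part of a
holomorphic function. -/
def Pluriharmonic (g : ℂ × ℂ → ℝ) (B : Set (ℂ × ℂ)) : Prop :=
  ∀ v ∈ B, ∃ U : Set (ℂ × ℂ), IsOpen U ∧ v ∈ U ∧ U ⊆ B ∧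
    ∃ h : ℂ × ℂ → ℂ, DifferentiableOn ℂ h U ∧ ∀ w ∈ U, g w = (h w).re

open MvPolynomial in
lemma hasDerivAt_ev_fst (p : MvPolynomial (Fin 2) ℂ) (w z : ℂ) :
    HasDerivAt (fun t => ev p (t, w)) (ev (pderiv 0 p) (z, w)) z := by
  induction p using MvPolynomial.induction_on with
  | C a => simpa [ev] using hasDerivAt_const z (MvPolynomial.eval ![z,w] (C a))
  | add p q hp hq => simpa [ev] using hp.fun_add hq
  | mul_X p i hp =>
    fin_cases i
    · have H := hp.fun_mul (hasDerivAt_id z)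
      simp only [ev, eval_mul, eval_X] at *
      simpa [pderiv_mul, pderiv_X_self, mul_one, mul_comm, add_comm] using H
    · have H := hp.mul_const w
      simp only [ev, eval_mul, eval_X] at *
      simpa [pderiv_mul, pderiv_X_of_ne (show (1:Fin 2) ≠ 0 by decide), mul_comm] using H

open MvPolynomial in
lemma hasDerivAt_ev_snd (p : MvPolynomial (Fin 2) ℂ) (z w : ℂ) :
    HasDerivAt (fun t => ev p (z, t)) (ev (pderiv 1 p) (z, w)) w := by
  induction p using MvPolynomial.induction_on with
  | C a => simpa [ev] using hasDerivAt_const w (MvPolynomial.eval ![z,w] (C a))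
  | add p q hp hq => simpa [ev] using hp.fun_add hq
  | mul_X p i hp =>
    fin_cases i
    · have H := hp.mul_const z
      simp only [ev, eval_mul, eval_X] at *
      simpa [pderiv_mul, pderiv_X_of_ne (show (0:Fin 2) ≠ 1 by decide), mul_comm] using H
    · have H := hp.fun_mul (hasDerivAt_id w)
      simp only [ev, eval_mul, eval_X] at *
      simpa [pderiv_mul, pderiv_X_self, mul_one, mul_comm, add_comm] using H

lemma pluriharmonic_locBound {g : ℂ × ℂ → ℝ} {B : Set (ℂ × ℂ)}
    (hph : Pluriharmonic g B) :
    ∀ x ∈ B, ∃ ρ > (0:ℝ), ∃ L : ℝ, ∀ y ∈ Metric.ball x ρ,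
      DifferentiableAt ℝ g y ∧ ‖fderiv ℝ g y‖ ≤ L := by
  intro x hx
  obtain ⟨U, hUo, hxU, hUB, h, hh, hgh⟩ := hph x hx
  obtain ⟨ρ0, hρ0, hball⟩ := Metric.isOpen_iff.1 hUo x hxU
  set ρ := ρ0 / 4 with hρdef
  have hρ : 0 < ρ := by positivity
  have hsub : Metric.closedBall x (3 * ρ) ⊆ U := fun y hy => by
    apply hball
    rw [Metric.mem_closedBall] at hy
    rw [Metric.mem_ball]
    linarith
  obtain ⟨Cx, hCx⟩ := (isCompact_closedBall x (3 * ρ)).exists_bound_of_continuousOn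
    (hh.continuousOn.mono hsub)
  have hCx0 : 0 ≤ Cx :=
    le_trans (norm_nonneg _) (hCx x (Metric.mem_closedBall_self (by positivity)))
  refine ⟨ρ, hρ, Cx / ρ + Cx / ρ, fun y hy => ?_⟩
  rw [Metric.mem_ball] at hy
  have hyU : y ∈ U := hball (lt_trans hy (by linarith))
  have hDh : HasFDerivAt h (fderiv ℂ h y) y :=
    (hh.differentiableAt (hUo.mem_nhds hyU)).hasFDerivAt
  set Dh := fderiv ℂ h y with hDhdef
  -- membership of slice points
  have hmem1 : ∀ t : ℂ, dist t y.1 ≤ ρ → (t, y.2) ∈ Metric.closedBall x (3 * ρ) := by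
    intro t ht
    rw [Metric.mem_closedBall, Prod.dist_eq]
    have h1 : dist t x.1 ≤ dist t y.1 + dist y.1 x.1 := dist_triangle _ _ _
    have h2 : dist y.1 x.1 ≤ dist y x := by rw [Prod.dist_eq]; exact le_max_left _ _
    have h3 : dist y.2 x.2 ≤ dist y x := by rw [Prod.dist_eq]; exact le_max_right _ _
    exact max_le (by linarith) (by linarith)
  have hmem2 : ∀ t : ℂ, dist t y.2 ≤ ρ → (y.1, t) ∈ Metric.closedBall x (3 * ρ) := by
    intro t ht
    rw [Metric.mem_closedBall, Prod.dist_eq]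
    have h1 : dist t x.2 ≤ dist t y.2 + dist y.2 x.2 := dist_triangle _ _ _
    have h2 : dist y.1 x.1 ≤ dist y x := by rw [Prod.dist_eq]; exact le_max_left _ _
    have h3 : dist y.2 x.2 ≤ dist y x := by rw [Prod.dist_eq]; exact le_max_right _ _
    exact max_le (by linarith) (by linarith)
  -- Cauchy estimates in each variable
  have key1 : ‖Dh ((1:ℂ), (0:ℂ))‖ ≤ Cx / ρ := by
    have hcurve : HasDerivAt (fun t : ℂ => (t, y.2)) ((1:ℂ), (0:ℂ)) y.1 :=
      HasDerivAt.prodMk (hasDerivAt_id y.1) (hasDerivAt_const _ _)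
    have hder : HasDerivAt (fun t => h (t, y.2)) (Dh ((1:ℂ), (0:ℂ))) y.1 :=
      hDh.comp_hasDerivAt y.1 hcurve
    have hd : DifferentiableOn ℂ (fun t => h (t, y.2)) (closure (Metric.ball y.1 ρ)) := by
      rw [closure_ball _ hρ.ne']
      intro t ht
      rw [Metric.mem_closedBall] at ht
      exact ((hh.differentiableAt (hUo.mem_nhds (hsub (hmem1 t ht)))).comp t
        (DifferentiableAt.prodMk differentiableAt_id (differentiableAt_const _))).differentiableWithinAt
    have := Complex.norm_deriv_le_of_forall_mem_sphere_norm_le hρ hd.diffContOnCl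
      (fun t ht => hCx _ (hmem1 t (le_of_eq (Metric.mem_sphere.1 ht))))
    rwa [hder.deriv] at this
  have key2 : ‖Dh ((0:ℂ), (1:ℂ))‖ ≤ Cx / ρ := by
    have hcurve : HasDerivAt (fun t : ℂ => (y.1, t)) ((0:ℂ), (1:ℂ)) y.2 :=
      HasDerivAt.prodMk (hasDerivAt_const _ _) (hasDerivAt_id y.2)
    have hder : HasDerivAt (fun t => h (y.1, t)) (Dh ((0:ℂ), (1:ℂ))) y.2 :=
      hDh.comp_hasDerivAt y.2 hcurve
    have hd : DifferentiableOn ℂ (fun t => h (y.1, t)) (closure (Metric.ball y.2 ρ)) := by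
      rw [closure_ball _ hρ.ne']
      intro t ht
      rw [Metric.mem_closedBall] at ht
      exact ((hh.differentiableAt (hUo.mem_nhds (hsub (hmem2 t ht)))).comp t
        (DifferentiableAt.prodMk (differentiableAt_const _) differentiableAt_id)).differentiableWithinAt
    have := Complex.norm_deriv_le_of_forall_mem_sphere_norm_le hρ hd.diffContOnCl
      (fun t ht => hCx _ (hmem2 t (le_of_eq (Metric.mem_sphere.1 ht))))
    rwa [hder.deriv] at this
  have hDhnorm : ‖Dh‖ ≤ Cx / ρ + Cx / ρ := by
    refine ContinuousLinearMap.opNorm_le_bound _ (by positivity) fun p => ?_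
    have hdecomp : p = p.1 • ((1:ℂ), (0:ℂ)) + p.2 • ((0:ℂ), (1:ℂ)) := by
      obtain ⟨p1, p2⟩ := p
      simp [Prod.ext_iff]
    calc ‖Dh p‖ = ‖p.1 • Dh ((1:ℂ),(0:ℂ)) + p.2 • Dh ((0:ℂ),(1:ℂ))‖ := by
          conv_lhs => rw [hdecomp]
          rw [map_add, map_smul, map_smul]
      _ ≤ ‖p.1‖ * ‖Dh ((1:ℂ),(0:ℂ))‖ + ‖p.2‖ * ‖Dh ((0:ℂ),(1:ℂ))‖ := by
          refine (norm_add_le _ _).trans ?_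
          rw [norm_smul, norm_smul]
      _ ≤ ‖p‖ * (Cx / ρ) + ‖p‖ * (Cx / ρ) := by
          gcongr
          · exact norm_fst_le p
          · exact norm_snd_le p
      _ = (Cx / ρ + Cx / ρ) * ‖p‖ := by ring
  have hgder : HasFDerivAt g (Complex.reCLM.comp (Dh.restrictScalars ℝ)) y := by
    have hhr : HasFDerivAt (fun w => (h w).re) (Complex.reCLM.comp (Dh.restrictScalars ℝ)) y :=
      Complex.reCLM.hasFDerivAt.comp y (hDh.restrictScalars ℝ)
    exact hhr.congr_of_eventuallyEq (Filter.eventuallyEq_of_mem (hUo.mem_nhds hyU) hgh)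
  refine ⟨hgder.differentiableAt, ?_⟩
  rw [hgder.fderiv]
  refine ContinuousLinearMap.opNorm_le_bound _ (by positivity) fun p => ?_
  calc ‖(Complex.reCLM.comp (Dh.restrictScalars ℝ)) p‖ = |(Dh p).re| := by
        simp [Real.norm_eq_abs]
    _ ≤ ‖Dh p‖ := Complex.abs_re_le_norm _
    _ = ‖Dh p‖ := rfl
    _ ≤ ‖Dh‖ * ‖p‖ := Dh.le_opNorm p
    _ ≤ (Cx / ρ + Cx / ρ) * ‖p‖ := by gcongr

lemma log_bounds {D C gv l : ℝ} (hD : 0 < D) (h : |gv - l / D| ≤ C / D) :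
    D * gv - C ≤ l ∧ l ≤ D * gv + C := by
  rw [abs_le] at h
  have h1 := mul_le_mul_of_nonneg_left h.1 hD.le
  have h2 := mul_le_mul_of_nonneg_left h.2 hD.le
  rw [mul_sub, mul_div_cancel₀ _ hD.ne'] at h1 h2
  rw [mul_neg, mul_div_cancel₀ _ hD.ne'] at h1
  rw [mul_div_cancel₀ _ hD.ne'] at h2
  constructor <;> linarith

/-- For a Hénon-type polynomial automorphism `f = (P₁, Q₁)` of `ℂ²` of
degree `d > 1` with iterates `f^n = (P_n, Q_n)` and Green function `g⁺`, one has, for each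
variable `j ∈ {z, w}`, `∂_j Q_n = o(d^n P_n)` locally uniformly on `B = {g⁺ > 0}`.
The standard facts listed in the context are taken as hypotheses. -/
theorem derivative_Q_little_o_henon
    (d : ℕ) (hd : 1 < d)
    (P Q : ℕ → MvPolynomial (Fin 2) ℂ)
    (F : ℂ × ℂ → ℂ × ℂ)
    (hF : ∀ v : ℂ × ℂ, F v = (ev (P 1) v, ev (Q 1) v))
    (hauto : ∃ Pi Qi : MvPolynomial (Fin 2) ℂ, ∀ v : ℂ × ℂ,
      (ev Pi (F v), ev Qi (F v)) = v ∧ F (ev Pi v, ev Qi v) = v)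
    (hiter : ∀ n : ℕ, 1 ≤ n → ∀ v : ℂ × ℂ, F^[n] v = (ev (P n) v, ev (Q n) v))
    (hdeg : ∀ n : ℕ, 1 ≤ n →
      (P n).totalDegree = d ^ n ∧ (P n).degreeOf 0 = d ^ n ∧ (Q n).totalDegree < d ^ n)
    (g : ℂ × ℂ → ℝ)
    (hglim : TendstoLocallyUniformly
      (fun (n : ℕ) (v : ℂ × ℂ) => Real.log (max 1 ‖F^[n] v‖) / (d : ℝ) ^ n) g atTop)
    (hgcont : Continuous g)
    (B : Set (ℂ × ℂ)) (hB : B = {v : ℂ × ℂ | 0 < g v})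
    (hph : Pluriharmonic g B)
    (hgP : ∀ K : Set (ℂ × ℂ), K ⊆ B → IsCompact K →
      ∃ C > (0 : ℝ), ∃ N : ℕ, ∀ n : ℕ, N ≤ n → ∀ v ∈ K,
        ev (P n) v ≠ 0 ∧
        |g v - Real.log (‖ev (P n) v‖) / (d : ℝ) ^ n| ≤ C / (d : ℝ) ^ n)
    (hQP : ∀ K : Set (ℂ × ℂ), K ⊆ B → IsCompact K → ∀ ε > (0 : ℝ), ∃ N : ℕ,
      ∀ n : ℕ, N ≤ n → ∀ v ∈ K,
        ‖ev (Q n) v‖ ≤ ε * ‖ev (P n) v‖) :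
    ∀ K : Set (ℂ × ℂ), K ⊆ B → IsCompact K → ∀ ε > (0 : ℝ), ∃ N : ℕ,
      ∀ n : ℕ, N ≤ n → ∀ v ∈ K,
        ‖ev (MvPolynomial.pderiv 0 (Q n)) v‖
          ≤ ε * (d : ℝ) ^ n * ‖ev (P n) v‖ ∧
        ‖ev (MvPolynomial.pderiv 1 (Q n)) v‖
          ≤ ε * (d : ℝ) ^ n * ‖ev (P n) v‖ := by
  intro K hKB hK ε hε
  have hBopen : IsOpen B := by
    rw [hB]; exact isOpen_lt continuous_const hgcont
  obtain ⟨δ, hδpos, hδ⟩ := hK.exists_cthickening_subset_open hBopen hKB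
  set K' := Metric.cthickening δ K with hK'def
  have hK'c : IsCompact K' := hK.cthickening
  have hK'B : K' ⊆ B := hδ
  -- uniform gradient bound on K'
  have loc : ∀ x ∈ K', ∃ ρ > (0:ℝ), ∃ L : ℝ, ∀ y ∈ Metric.ball x ρ,
      DifferentiableAt ℝ g y ∧ ‖fderiv ℝ g y‖ ≤ L :=
    fun x hx => pluriharmonic_locBound hph x (hK'B hx)
  choose! ρ hρ L hL using loc
  obtain ⟨t, ht⟩ := hK'c.elim_nhds_subcover' (fun x _ => Metric.ball x (ρ x))
    (fun x hx => Metric.ball_mem_nhds _ (hρ x hx))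
  obtain ⟨M0, hM0⟩ := (t.image fun i => L i.1).exists_le
  set M := max M0 0 with hMdef
  have hMnn : 0 ≤ M := le_max_right _ _
  have hgrad : ∀ x ∈ K', DifferentiableAt ℝ g x ∧ ‖fderiv ℝ g x‖ ≤ M := by
    intro x hx
    have hx' := ht hx
    rw [Set.mem_iUnion₂] at hx'
    obtain ⟨i, hi, hxi⟩ := hx'
    obtain ⟨h1, h2⟩ := hL i.1 i.2 x hxi
    exact ⟨h1, h2.trans (le_max_of_le_left (hM0 _ (Finset.mem_image_of_mem _ hi)))⟩
  -- Lipschitz-type estimate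
  have hLip : ∀ v ∈ K, ∀ y : ℂ × ℂ, dist y v ≤ δ → g y - g v ≤ M * dist y v := by
    intro v hv y hy
    have hsub : Metric.closedBall v δ ⊆ K' := Metric.closedBall_subset_cthickening hv δ
    have hmv := (convex_closedBall v δ).norm_image_sub_le_of_norm_hasFDerivWithin_le
      (fun x hx => ((hgrad x (hsub hx)).1.hasFDerivAt).hasFDerivWithinAt)
      (fun x hx => (hgrad x (hsub hx)).2)
      (Metric.mem_closedBall_self hδpos.le) (Metric.mem_closedBall.2 hy)
    rw [Real.norm_eq_abs] at hmv
    have h1 : g y - g v ≤ M * ‖y - v‖ := (le_abs_self _).trans hmv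
    rwa [← dist_eq_norm] at h1
  obtain ⟨C, hCpos, N₁, hC⟩ := hgP K' hK'B hK'c
  set ε₂ := ε * Real.exp (-(M + 2 * C)) with hε₂def
  have hε₂pos : 0 < ε₂ := by positivity
  obtain ⟨N₂, hN₂⟩ := hQP K' hK'B hK'c ε₂ hε₂pos
  have hd1 : (1:ℝ) < d := by exact_mod_cast hd
  obtain ⟨n₀, hn₀⟩ := pow_unbounded_of_one_lt (1/δ) hd1
  refine ⟨max (max N₁ N₂) n₀, fun n hn v hv => ?_⟩
  have hn₁ : N₁ ≤ n := le_trans (le_trans (le_max_left _ _) (le_max_left _ _)) hn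
  have hn₂ : N₂ ≤ n := le_trans (le_trans (le_max_right _ _) (le_max_left _ _)) hn
  set D := (d:ℝ)^n with hDdef
  have hDpos : 0 < D := by positivity
  set r := D⁻¹ with hrdef
  have hrpos : 0 < r := inv_pos.2 hDpos
  have hrδ : r ≤ δ := by
    have h2 : (d:ℝ)^n₀ ≤ D := pow_le_pow_right₀ hd1.le (le_trans (le_max_right _ _) hn)
    have h3 : 1/δ < D := lt_of_lt_of_le hn₀ h2
    rw [hrdef, inv_eq_one_div, div_le_iff₀ hDpos]
    rw [div_lt_iff₀ hδpos] at h3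
    nlinarith
  have hvK' : v ∈ K' := Metric.self_subset_cthickening K hv
  have hmem : ∀ v' : ℂ × ℂ, dist v' v ≤ r → v' ∈ K' := fun v' h =>
    Metric.closedBall_subset_cthickening hv δ (Metric.mem_closedBall.2 (h.trans hrδ))
  obtain ⟨hPne, hPabs⟩ := hC n hn₁ v hvK'
  have hPpos : 0 < ‖ev (P n) v‖ := norm_pos_iff.mpr hPne
  have hlow : Real.exp (D * g v - C) ≤ ‖ev (P n) v‖ := by
    rw [← Real.exp_log hPpos]
    exact Real.exp_le_exp.2 (log_bounds hDpos hPabs).1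
  have hDr : D * r = 1 := mul_inv_cancel₀ hDpos.ne'
  -- bound on points at distance ≤ r from v
  have hsb : ∀ v' : ℂ × ℂ, dist v' v ≤ r →
      ‖ev (Q n) v'‖ ≤ ε * ‖ev (P n) v‖ := by
    intro v' hdist
    have hv'K' := hmem v' hdist
    obtain ⟨hne', hb'⟩ := hC n hn₁ v' hv'K'
    have hpos' : 0 < ‖ev (P n) v'‖ := norm_pos_iff.mpr hne'
    have hup : ‖ev (P n) v'‖ ≤ Real.exp (D * g v' + C) := by
      rw [← Real.exp_log hpos']
      exact Real.exp_le_exp.2 (log_bounds hDpos hb').2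
    have hgv' : g v' ≤ g v + M * r := by
      have h1 := hLip v hv v' (hdist.trans hrδ)
      nlinarith [mul_le_mul_of_nonneg_left hdist hMnn]
    have hDg : D * g v' + C ≤ D * g v + M + C := by
      have e : D * (g v + M * r) = D * g v + M := by
        rw [mul_add, ← mul_assoc, mul_comm D M, mul_assoc, hDr, mul_one]
      have h2 := mul_le_mul_of_nonneg_left hgv' hDpos.le
      rw [e] at h2
      linarith
    calc ‖ev (Q n) v'‖ ≤ ε₂ * ‖ev (P n) v'‖ := hN₂ n hn₂ v' hv'K'
      _ ≤ ε₂ * Real.exp (D * g v' + C) := mul_le_mul_of_nonneg_left hup hε₂pos.le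
      _ ≤ ε₂ * Real.exp (D * g v + M + C) :=
          mul_le_mul_of_nonneg_left (Real.exp_le_exp.2 hDg) hε₂pos.le
      _ = ε * Real.exp (D * g v - C) := by
          rw [hε₂def, mul_assoc, ← Real.exp_add]
          congr 2
          ring
      _ ≤ ε * ‖ev (P n) v‖ := mul_le_mul_of_nonneg_left hlow hε.le
  -- Cauchy estimates
  have hgoal : ((ε * ‖ev (P n) v‖) / r) = ε * D * ‖ev (P n) v‖ := by
    rw [hrdef, div_eq_mul_inv, inv_inv]
    ring
  constructor
  · have hdiffQ : Differentiable ℂ (fun s : ℂ => ev (Q n) (s, v.2)) :=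
      fun s => (hasDerivAt_ev_fst (Q n) v.2 s).differentiableAt
    have cauchy := Complex.norm_deriv_le_of_forall_mem_sphere_norm_le hrpos
      (hdiffQ.diffContOnCl) (C := ε * ‖ev (P n) v‖) (c := v.1) (fun s hs => by
        refine hsb (s, v.2) ?_
        rw [Metric.mem_sphere] at hs
        rw [Prod.dist_eq]
        simp [hs, hrpos.le])
    rw [(hasDerivAt_ev_fst (Q n) v.2 v.1).deriv, hgoal] at cauchy
    exact cauchy
  · have hdiffQ : Differentiable ℂ (fun s : ℂ => ev (Q n) (v.1, s)) :=
      fun s => (hasDerivAt_ev_snd (Q n) v.1 s).differentiableAt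
    have cauchy := Complex.norm_deriv_le_of_forall_mem_sphere_norm_le hrpos
      (hdiffQ.diffContOnCl) (C := ε * ‖ev (P n) v‖) (c := v.2) (fun s hs => by
        refine hsb (v.1, s) ?_
        rw [Metric.mem_sphere] at hs
        rw [Prod.dist_eq]
        simp [hs, hrpos.le])
    rw [(hasDerivAt_ev_snd (Q n) v.1 v.2).deriv, hgoal] at cauchy
    exact cauchy
end
end

section
/- Let B ⊂ ℂ² be open, let g : B → ℝ be pluriharmonic, and let a₃, a₄ ∈ ℂ with a₄ ≠ 0. Suppose there is R > 0 such that the line tail L_R := {(z, −(a₃/a₄)z) : z ∈ ℂ, |z| > R} is contained in B and g(z, −(a₃/a₄)z) → +∞ as |z| → ∞. Then the holomorphic function a₄ ∂_z g − a₃ ∂_w g does not vanish identically on the connected component of B containing L_R; in particular it is not identically zero on B. -/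
open Filter Topology

noncomputable section

-- auxiliary: wirtinger derivatives in terms of a local holomorphic primitive
lemma wirt_eval {h : ℂ × ℂ → ℂ} {U : Set (ℂ × ℂ)} (hUo : IsOpen U)
    (hhol : DifferentiableOn ℂ h U) {g : ℂ × ℂ → ℝ} (hre : ∀ w ∈ U, g w = (h w).re)
    {w : ℂ × ℂ} (hw : w ∈ U) :
    wirtZ g w = fderiv ℂ h w (1, 0) / 2 ∧ wirtW g w = fderiv ℂ h w (0, 1) / 2 := by
  have hd : DifferentiableAt ℂ h w := hhol.differentiableAt (hUo.mem_nhds hw)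
  have heq : fderiv ℝ g w =
      Complex.reCLM.comp ((fderiv ℂ h w).restrictScalars ℝ) := by
    have h1 : g =ᶠ[nhds w] fun x => (h x).re := by
      filter_upwards [hUo.mem_nhds hw] with x hx using hre x hx
    rw [h1.fderiv_eq]
    exact (Complex.reCLM.hasFDerivAt.comp w
      (hd.hasFDerivAt.restrictScalars ℝ)).fderiv
  have key : ∀ u : ℂ × ℂ, fderiv ℝ g w u = (fderiv ℂ h w u).re := by
    intro u; rw [heq]; rfl
  constructor
  · have e1 : ((Complex.I, (0:ℂ)) : ℂ × ℂ) = Complex.I • ((1:ℂ), (0:ℂ)) := by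
      simp [Prod.ext_iff]
    rw [wirtZ, key, key, e1, map_smul]
    set u := fderiv ℂ h w ((1:ℂ), (0:ℂ)) with hu
    have : (Complex.I • u).re = -u.im := by simp [Complex.smul_re]
    rw [this]
    simp [Complex.ext_iff]
  · have e1 : (((0:ℂ), Complex.I) : ℂ × ℂ) = Complex.I • ((0:ℂ), (1:ℂ)) := by
      simp [Prod.ext_iff]
    rw [wirtW, key, key, e1, map_smul]
    set u := fderiv ℂ h w ((0:ℂ), (1:ℂ)) with hu
    have : (Complex.I • u).re = -u.im := by simp [Complex.smul_re]
    rw [this]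
    simp [Complex.ext_iff]

lemma isPreconnected_abs_gt (R : ℝ) (hR : 0 ≤ R) :
    IsPreconnected {z : ℂ | R < ‖z‖} := by
  have hrank : 1 < Module.rank ℝ ℂ := by
    rw [Complex.rank_real_complex]; norm_num
  apply isPreconnected_of_forall (((R + 1 : ℝ) : ℂ))
  intro y hy
  have hy' : R < ‖y‖ := hy
  have hr0 : 0 < ‖y‖ := lt_of_le_of_lt hR hy'
  refine ⟨Metric.sphere 0 ‖y‖ ∪
      segment ℝ ((‖y‖ : ℝ) : ℂ) (((R + 1 : ℝ) : ℂ)), ?_, ?_, ?_, ?_⟩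
  · rintro z (hz | hz)
    · have : ‖z‖ = ‖y‖ := by simpa using hz
      show R < ‖z‖
      rw [this]; exact hy'
    · obtain ⟨a, b, ha, hb, hab, hz⟩ := hz
      show R < ‖z‖
      have : z = ((a * ‖y‖ + b * (R + 1) : ℝ) : ℂ) := by
        rw [← hz]; push_cast [Complex.real_smul]; ring
      rw [this, Complex.norm_real, Real.norm_eq_abs]
      have h1 : R < a * ‖y‖ + b * (R + 1) := by
        rcases eq_or_lt_of_le hb with hb' | hb'
        · have : a = 1 := by linarith
          nlinarith
        · nlinarith
      rw [abs_of_pos (lt_of_le_of_lt hR h1)]; exact h1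
  · exact Or.inr (right_mem_segment ℝ _ _)
  · exact Or.inl (by simp)
  · apply IsPreconnected.union ((‖y‖ : ℝ) : ℂ)
    · simp [abs_of_pos hr0]
    · exact left_mem_segment ℝ _ _
    · exact isPreconnected_sphere hrank 0 ‖y‖
    · exact (convex_segment _ _).isPreconnected


set_option maxHeartbeats 4000000 in
/-- Let `B ⊆ ℂ²` be open, `g : B → ℝ` pluriharmonic, `a₄ ≠ 0`, and suppose
the line tail `L_R = {(z, −(a₃/a₄)z) : |z| > R}` lies in `B` with `g → +∞` along it.  Then
the holomorphic function `a₄ ∂_z g − a₃ ∂_w g` does not vanish identically on the connected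
component of `B` containing `L_R`; in particular it is not identically zero on `B`. -/
theorem wirtinger_combination_not_identically_zero
    (B : Set (ℂ × ℂ)) (hB : IsOpen B) (g : ℂ × ℂ → ℝ) (hph : Pluriharmonic g B)
    (a₃ a₄ : ℂ) (ha₄ : a₄ ≠ 0) (R : ℝ) (hR : 0 < R)
    (hLR : ∀ z : ℂ, R < ‖z‖ → ((z, -(a₃ / a₄) * z) : ℂ × ℂ) ∈ B)
    (hdiv : Tendsto (fun z : ℂ => g (z, -(a₃ / a₄) * z))
      (Filter.comap (fun z : ℂ => ‖z‖) Filter.atTop) Filter.atTop) :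
    (∃ v ∈ connectedComponentIn B
        ((((R + 1 : ℝ) : ℂ), -(a₃ / a₄) * ((R + 1 : ℝ) : ℂ)) : ℂ × ℂ),
      a₄ * wirtZ g v - a₃ * wirtW g v ≠ 0) ∧
    (∃ v ∈ B, a₄ * wirtZ g v - a₃ * wirtW g v ≠ 0) := by
  set c : ℂ := -(a₃ / a₄) with hc
  set z₀ : ℂ := ((R + 1 : ℝ) : ℂ) with hz₀
  set p₀ : ℂ × ℂ := (z₀, c * z₀) with hp₀
  set V : Set ℂ := {z : ℂ | R < ‖z‖} with hV
  set ψ : ℂ → ℝ := fun z => g (z, c * z) with hψ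
  have hz₀V : z₀ ∈ V := by
    show R < ‖((R + 1 : ℝ) : ℂ)‖
    rw [Complex.norm_real, Real.norm_eq_abs, abs_of_pos (by linarith)]
    linarith
  have hVopen : IsOpen V := isOpen_lt continuous_const continuous_norm
  have hVpre : IsPreconnected V := isPreconnected_abs_gt R hR.le
  have hℓcont : Continuous (fun z : ℂ => ((z, c * z) : ℂ × ℂ)) :=
    continuous_id.prodMk (continuous_const.mul continuous_id)
  have hTsub : (fun z : ℂ => ((z, c * z) : ℂ × ℂ)) '' V ⊆ connectedComponentIn B p₀ := by
    apply IsPreconnected.subset_connectedComponentIn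
    · exact hVpre.image _ hℓcont.continuousOn
    · exact ⟨z₀, hz₀V, rfl⟩
    · rintro _ ⟨z, hz, rfl⟩; exact hLR z hz
  have main : ∃ v ∈ connectedComponentIn B p₀, a₄ * wirtZ g v - a₃ * wirtW g v ≠ 0 := by
    by_contra hcon
    push_neg at hcon
    -- local constancy of ψ on V
    have locconst : ∀ z ∈ V, ∃ ε > 0, Metric.ball z ε ⊆ V ∧
        ∀ z' ∈ Metric.ball z ε, ψ z' = ψ z := by
      intro z hz
      obtain ⟨U, hUo, hvU, hUB, h, hhol, hre⟩ := hph (z, c * z) (hLR z hz)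
      have hWopen : IsOpen ((fun z : ℂ => ((z, c * z) : ℂ × ℂ)) ⁻¹' U ∩ V) :=
        (hUo.preimage hℓcont).inter hVopen
      obtain ⟨ε, εpos, hball⟩ := Metric.isOpen_iff.1 hWopen z ⟨hvU, hz⟩
      set H : ℂ → ℂ := fun t => h (t, c * t) with hH
      have hderivH : ∀ z' ∈ Metric.ball z ε, HasDerivAt H 0 z' := by
        intro z' hz'
        obtain ⟨hU', hV'⟩ := hball hz'
        have hd : DifferentiableAt ℂ h (z', c * z') := hhol.differentiableAt (hUo.mem_nhds hU')
        set L := fderiv ℂ h (z', c * z') with hL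
        have hl : HasDerivAt (fun t : ℂ => ((t, c * t) : ℂ × ℂ)) (1, c) z' := by
          simpa using (hasDerivAt_id z').prodMk ((hasDerivAt_id z').const_mul c)
        have hHd : HasDerivAt H (L (1, c)) z' := hd.hasFDerivAt.comp_hasDerivAt z' hl
        have hF0 : a₄ * wirtZ g (z', c * z') - a₃ * wirtW g (z', c * z') = 0 :=
          hcon _ (hTsub ⟨z', hV', rfl⟩)
        obtain ⟨e1, e2⟩ := wirt_eval hUo hhol hre hU'
        rw [e1, e2] at hF0
        have hkey : a₄ * L (1, 0) = a₃ * L (0, 1) := by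
          field_simp at hF0; linear_combination hF0
        have hsplit : L (1, c) = L (1, 0) + c * L (0, 1) := by
          have : ((1 : ℂ), c) = ((1 : ℂ), (0:ℂ)) + c • ((0:ℂ), (1:ℂ)) := by
            simp [Prod.ext_iff]
          rw [this, map_add, map_smul, smul_eq_mul]
        have hzero : L (1, c) = 0 := by
          have h4 : a₄ * L (1, c) = 0 := by
            rw [hsplit, hc]
            field_simp
            linear_combination hkey
          exact (mul_eq_zero.1 h4).resolve_left ha₄
        rw [hzero] at hHd
        exact hHd
      refine ⟨ε, εpos, fun x hx => (hball hx).2, ?_⟩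
      intro z' hz'
      have hHconst : H z' = H z := by
        apply (convex_ball z ε).is_const_of_fderivWithin_eq_zero (𝕜 := ℂ) (f := H)
        · intro x hx
          exact ((hderivH x hx).differentiableAt).differentiableWithinAt
        · intro x hx
          rw [fderivWithin_of_isOpen Metric.isOpen_ball hx]
          have := (hderivH x hx).deriv
          rw [← toSpanSingleton_deriv, this]
          ext; simp
        · exact hz'
        · exact Metric.mem_ball_self εpos
      have hgre : ∀ t ∈ Metric.ball z ε, ψ t = (H t).re := fun t ht =>
        hre _ (hball ht).1
      rw [hgre z' hz', hgre z (Metric.mem_ball_self εpos), hHconst]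
    -- ψ is constant on V
    haveI : PreconnectedSpace V := Subtype.preconnectedSpace hVpre
    have hlc : IsLocallyConstant (fun z : V => ψ z) := by
      rw [IsLocallyConstant.iff_exists_open]
      rintro ⟨x, hx⟩
      obtain ⟨ε, εpos, hbV, hconst⟩ := locconst x hx
      refine ⟨Subtype.val ⁻¹' Metric.ball x ε, Metric.isOpen_ball.preimage continuous_subtype_val,
        Metric.mem_ball_self εpos, ?_⟩
      rintro ⟨y, hy⟩ hy'
      exact hconst y hy'
    have hconstV : ∀ z ∈ V, ψ z = ψ z₀ := by
      intro z hz
      exact hlc.apply_eq_of_preconnectedSpace ⟨z, hz⟩ ⟨z₀, hz₀V⟩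
    -- contradiction with hdiv
    haveI : (Filter.comap (fun z : ℂ => ‖z‖) Filter.atTop).NeBot := by
      apply Filter.comap_neBot
      intro t ht
      obtain ⟨b, hb⟩ := mem_atTop_sets.1 ht
      exact ⟨((max b 0 : ℝ) : ℂ), hb _ (by
        rw [Complex.norm_real, Real.norm_eq_abs, abs_of_nonneg (le_max_right b 0)]
        exact le_max_left b 0)⟩
    have h1 : ∀ᶠ z in Filter.comap (fun z : ℂ => ‖z‖) Filter.atTop, ψ z₀ + 1 ≤ ψ z :=
      hdiv.eventually_ge_atTop _
    have h2 : ∀ᶠ z in Filter.comap (fun z : ℂ => ‖z‖) Filter.atTop, z ∈ V :=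
      Filter.preimage_mem_comap (Ioi_mem_atTop R)
    obtain ⟨z, hz1, hz2⟩ := (h1.and h2).exists
    have := hconstV z hz2
    linarith
  refine ⟨main, ?_⟩
  obtain ⟨v, hv, hv'⟩ := main
  exact ⟨v, connectedComponentIn_subset _ _ hv, hv'⟩
end
end

section
/- Let F = (P, Q) : ℂ² → ℂ² be a polynomial map whose Jacobian determinant det DF = ∂_zP·∂_wQ − ∂_wP·∂_zQ is a constant J ∈ ℂ, and suppose that for some integer D ≥ 2: deg P = deg_z P = D > deg Q and the homogeneous part of P of total degree D equals c z^D for some c ∈ ℂ ∖ {0}. Let A = (a₁, a₂; a₃, a₄) ∈ M₂(ℂ) with a₄ ≠ 0. Then det(DF − A) = J − a₁ ∂_w Q − a₄ ∂_z P + a₃ ∂_w P + a₂ ∂_z Q + det A as polynomials in ℂ[z,w], and this polynomial has total degree exactly D − 1. -/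
open MvPolynomial

lemma coeff_pderiv' {σ : Type*} [DecidableEq σ] (i : σ) (p : MvPolynomial σ ℂ) (m : σ →₀ ℕ) :
    coeff m (pderiv i p) = (m i + 1 : ℕ) * coeff (m + Finsupp.single i 1) p := by
  induction p using MvPolynomial.induction_on' with
  | monomial s a =>
    rw [pderiv_monomial, coeff_monomial, coeff_monomial]
    by_cases h : s = m + Finsupp.single i 1
    · subst h
      have h1 : m + Finsupp.single i 1 - Finsupp.single i 1 = m := by
        ext j; simp [Finsupp.sub_apply, Finsupp.add_apply]
      have h2 := Finsupp.add_apply m (Finsupp.single i 1) i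
      rw [if_pos h1, h2, Finsupp.single_apply, if_pos rfl]
      simp only [if_true]; push_cast; ring
    · rw [if_neg h, mul_zero]
      by_cases h2 : s - Finsupp.single i 1 = m
      · have hsi : s i = 0 := by
          by_contra hsi
          apply h
          ext j
          have hj := DFunLike.congr_fun h2 j
          simp only [Finsupp.sub_apply, Finsupp.add_apply, Finsupp.single_apply] at hj ⊢
          by_cases hji : i = j
          · subst hji; simp at hj ⊢; omega
          · simp [hji] at hj ⊢; omega
        simp [hsi]
      · rw [if_neg h2]
  | add p q hp hq => simp [hp, hq, coeff_add, add_mul, mul_add]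

lemma totalDegree_pderiv_le' {σ : Type*} [DecidableEq σ] (i : σ) (p : MvPolynomial σ ℂ) :
    (pderiv i p).totalDegree ≤ p.totalDegree - 1 := by
  rw [totalDegree]
  apply Finset.sup_le
  intro m hm
  rw [mem_support_iff, coeff_pderiv'] at hm
  have h2 : coeff (m + Finsupp.single i 1) p ≠ 0 := fun h => hm (by simp [h])
  have h3 := le_totalDegree (mem_support_iff.mpr h2)
  have hsum : (m + Finsupp.single i 1).sum (fun _ e => e)
      = m.sum (fun _ e => e) + 1 := by
    rw [Finsupp.sum_add_index' (fun _ => rfl) (fun _ _ _ => rfl),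
      Finsupp.sum_single_index rfl]
  omega

lemma deg2 (d : Fin 2 →₀ ℕ) : d.degree = d 0 + d 1 := by
  rw [Finsupp.degree_apply, Finset.sum_subset (Finset.subset_univ _)
    (fun i _ hi => Finsupp.notMem_support_iff.mp hi), Fin.sum_univ_two]

/-- Let `F = (P, Q) : ℂ² → ℂ²` be a polynomial map with constant Jacobian
determinant `J`, with `deg P = deg_z P = D ≥ 2 > deg Q` and degree-`D` homogeneous part of
`P` equal to `c z^D`, `c ≠ 0`.  For `A = (a₁,a₂;a₃,a₄)` with `a₄ ≠ 0`,
`det(DF − A) = J − a₁ ∂_w Q − a₄ ∂_z P + a₃ ∂_w P + a₂ ∂_z Q + det A` and this polynomial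
has total degree exactly `D − 1`. -/
theorem det_jacobian_minus_matrix_degree
    (P Q : MvPolynomial (Fin 2) ℂ) (J : ℂ)
    (hJac : pderiv 0 P * pderiv 1 Q - pderiv 1 P * pderiv 0 Q = C J)
    (D : ℕ) (hD : 2 ≤ D)
    (hPdeg : P.totalDegree = D) (hPdegz : P.degreeOf 0 = D) (hQdeg : Q.totalDegree < D)
    (c : ℂ) (hc : c ≠ 0)
    (hhom : (homogeneousComponent D) P = C c * X 0 ^ D)
    (a₁ a₂ a₃ a₄ : ℂ) (ha₄ : a₄ ≠ 0) :
    (pderiv 0 P - C a₁) * (pderiv 1 Q - C a₄) - (pderiv 1 P - C a₂) * (pderiv 0 Q - C a₃)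
      = C J - C a₁ * pderiv 1 Q - C a₄ * pderiv 0 P + C a₃ * pderiv 1 P
        + C a₂ * pderiv 0 Q + C (a₁ * a₄ - a₂ * a₃) ∧
    ((pderiv 0 P - C a₁) * (pderiv 1 Q - C a₄)
        - (pderiv 1 P - C a₂) * (pderiv 0 Q - C a₃)).totalDegree = D - 1 := by
  have heq : (pderiv 0 P - C a₁) * (pderiv 1 Q - C a₄)
        - (pderiv 1 P - C a₂) * (pderiv 0 Q - C a₃)
      = C J - C a₁ * pderiv 1 Q - C a₄ * pderiv 0 P + C a₃ * pderiv 1 P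
        + C a₂ * pderiv 0 Q + C (a₁ * a₄ - a₂ * a₃) := by
    rw [map_sub, map_mul, map_mul]
    linear_combination hJac
  refine ⟨heq, ?_⟩
  rw [heq]
  -- upper bound
  have hP0 : (pderiv (0 : Fin 2) P).totalDegree ≤ D - 1 := by
    simpa [hPdeg] using totalDegree_pderiv_le' 0 P
  have hP1 : (pderiv (1 : Fin 2) P).totalDegree ≤ D - 1 := by
    simpa [hPdeg] using totalDegree_pderiv_le' 1 P
  have hQle : ∀ i : Fin 2, (pderiv i Q).totalDegree ≤ D - 2 := by
    intro i
    have := totalDegree_pderiv_le' i Q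
    omega
  have hCmul : ∀ (a : ℂ) (p : MvPolynomial (Fin 2) ℂ),
      (C a * p).totalDegree ≤ p.totalDegree := fun a p =>
    (totalDegree_mul _ _).trans (by simp [totalDegree_C])
  have hre : C J - C a₁ * pderiv 1 Q - C a₄ * pderiv 0 P + C a₃ * pderiv 1 P
        + C a₂ * pderiv 0 Q + C (a₁ * a₄ - a₂ * a₃)
      = C J + C (-a₁) * pderiv 1 Q + C (-a₄) * pderiv 0 P + C a₃ * pderiv 1 P
        + C a₂ * pderiv 0 Q + C (a₁ * a₄ - a₂ * a₃) := by
    rw [map_neg, map_neg]; ring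
  have hub : (C J - C a₁ * pderiv 1 Q - C a₄ * pderiv 0 P + C a₃ * pderiv 1 P
        + C a₂ * pderiv 0 Q + C (a₁ * a₄ - a₂ * a₃)).totalDegree ≤ D - 1 := by
    rw [hre]
    refine (totalDegree_add _ _).trans (max_le ((totalDegree_add _ _).trans (max_le
      ((totalDegree_add _ _).trans (max_le ((totalDegree_add _ _).trans (max_le
      ((totalDegree_add _ _).trans (max_le ?_ ?_)) ?_)) ?_)) ?_)) ?_)
    · simp [totalDegree_C]
    · exact (hCmul _ _).trans ((hQle 1).trans (by omega))
    · exact (hCmul _ _).trans hP0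
    · exact (hCmul _ _).trans hP1
    · exact (hCmul _ _).trans ((hQle 0).trans (by omega))
    · rw [totalDegree_C]
      exact Nat.zero_le _
  -- lower bound: the coefficient of z^(D-1) is -a₄ * D * c ≠ 0
  set m : Fin 2 →₀ ℕ := Finsupp.single 0 (D - 1) with hm
  have hmsum : m.sum (fun _ e => e) = D - 1 := Finsupp.sum_single_index rfl
  have hmadd0 : m + Finsupp.single (0 : Fin 2) 1 = Finsupp.single 0 D := by
    rw [hm, ← Finsupp.single_add]
    congr 1
    omega
  -- coefficient of z^D in P is c
  have hcP : coeff (Finsupp.single (0 : Fin 2) D) P = c := by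
    have h1 := coeff_homogeneousComponent (σ := Fin 2) (R := ℂ) D P
      (Finsupp.single (0 : Fin 2) D)
    rw [hhom] at h1
    have hdeg : (Finsupp.single (0 : Fin 2) D).degree = D := by
      rw [deg2]; simp [Finsupp.single_apply]
    rw [if_pos hdeg] at h1
    rw [← h1, coeff_C_mul, coeff_X_pow, if_pos rfl, mul_one]
  -- coefficient of z^(D-1) w in P is 0
  have hcP1 : coeff (m + Finsupp.single (1 : Fin 2) 1) P = 0 := by
    have h1 := coeff_homogeneousComponent (σ := Fin 2) (R := ℂ) D P
      (m + Finsupp.single (1 : Fin 2) 1)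
    rw [hhom] at h1
    have hdeg : (m + Finsupp.single (1 : Fin 2) 1).degree = D := by
      rw [deg2]
      simp [hm, Finsupp.single_apply]
      omega
    rw [if_pos hdeg] at h1
    rw [← h1, coeff_C_mul, coeff_X_pow, if_neg, mul_zero]
    intro h
    have := DFunLike.congr_fun h 1
    simp [hm, Finsupp.single_apply] at this
  have hcoeff0 : coeff m (pderiv (0 : Fin 2) P) = (D : ℂ) * c := by
    rw [coeff_pderiv', hmadd0, hcP]
    have h3 : m 0 + 1 = D := by
      rw [hm, Finsupp.single_apply, if_pos rfl]
      omega
    rw [h3]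
  have hcoeff1 : coeff m (pderiv (1 : Fin 2) P) = 0 := by
    rw [coeff_pderiv', hcP1, mul_zero]
  have hcoeffQ : ∀ i : Fin 2, coeff m (pderiv i Q) = 0 := by
    intro i
    apply coeff_eq_zero_of_totalDegree_lt
    have h1 := hQle i
    have h2 : (∑ j ∈ m.support, m j) = D - 1 := hmsum
    omega
  have hcC : ∀ b : ℂ, coeff m (C b : MvPolynomial (Fin 2) ℂ) = 0 := by
    intro b
    rw [coeff_C, if_neg]
    intro h
    have := DFunLike.congr_fun h 0
    simp [hm] at this
    omega
  have hcoeffS : coeff m (C J - C a₁ * pderiv 1 Q - C a₄ * pderiv 0 P + C a₃ * pderiv 1 P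
        + C a₂ * pderiv 0 Q + C (a₁ * a₄ - a₂ * a₃)) = -a₄ * (D : ℂ) * c := by
    simp only [coeff_add, coeff_sub, coeff_C_mul, hcoeff0, hcoeff1, hcoeffQ, hcC]
    ring
  have hlb : D - 1 ≤ (C J - C a₁ * pderiv 1 Q - C a₄ * pderiv 0 P + C a₃ * pderiv 1 P
        + C a₂ * pderiv 0 Q + C (a₁ * a₄ - a₂ * a₃)).totalDegree := by
    have hne : coeff m (C J - C a₁ * pderiv 1 Q - C a₄ * pderiv 0 P + C a₃ * pderiv 1 P
        + C a₂ * pderiv 0 Q + C (a₁ * a₄ - a₂ * a₃)) ≠ 0 := by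
      rw [hcoeffS]
      have hDne : (D : ℂ) ≠ 0 := Nat.cast_ne_zero.mpr (by omega)
      exact mul_ne_zero (mul_ne_zero (neg_ne_zero.mpr ha₄) hDne) hc
    calc D - 1 = m.sum (fun _ e => e) := hmsum.symm
      _ ≤ _ := le_totalDegree (mem_support_iff.mpr hne)
  omega
end
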